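/- arXiv:2412.15390 — 4 statements merged into one kernel-verified Lean document; each statement's English description precedes it below -/
import Mathlib

section
/- A representation (ρ₁,ρ₂,ρ₃) of the 3-Kronecker quiver of dimension vector (2,3) is stable if and only if the images of ρ₁, ρ₂, ρ₃ together span ℂ³ and, for every nonzero v ∈ ℂ², the span of ρ₁(v), ρ₂(v), ρ₃(v) has dimension at least 2. -/
open MvPolynomial TensorProduct

noncomputable section

/-- The polynomial ring ℂ[x,y,z]. -/
abbrev Pxyz : Type := MvPolynomial (Fin 3) ℂ

/-- The linear form in ℂ[x,y,z] with coefficient vector `w`,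
identifying `W = ℂ³` with the space of linear forms via the basis `x, y, z`. -/
def toPoly (w : Fin 3 → ℂ) : Pxyz := ∑ k, MvPolynomial.C (w k) * MvPolynomial.X k

/-- The representation `(ρ₁, ρ₂, ρ₃)` of the 3-Kronecker quiver of dimension vector `(2,3)`
determined by a 2×3 matrix `r` of linear forms (given by their coefficient vectors), via
`v·r = x·ρ₁(v) + y·ρ₂(v) + z·ρ₃(v)`. -/
def repOf (r : Matrix (Fin 2) (Fin 3) (Fin 3 → ℂ)) (k : Fin 3) :
    (Fin 2 → ℂ) →ₗ[ℂ] (Fin 3 → ℂ) :=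
  ∑ i : Fin 2, (LinearMap.proj i : (Fin 2 → ℂ) →ₗ[ℂ] ℂ).smulRight (fun j => r i j k)

/-- Stability (for the stability parameter θ = (3,−2)) of a representation of the 3-Kronecker
quiver of dimension vector (2,3): for every subrepresentation `(U₁, U₂)` other than `(0,0)` and
`(ℂ², ℂ³)` one has `3·dim U₁ < 2·dim U₂`. -/
def KStable (ρ : Fin 3 → ((Fin 2 → ℂ) →ₗ[ℂ] (Fin 3 → ℂ))) : Prop :=
  ∀ (U₁ : Submodule ℂ (Fin 2 → ℂ)) (U₂ : Submodule ℂ (Fin 3 → ℂ)),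
    (∀ k, U₁.map (ρ k) ≤ U₂) →
    ¬(U₁ = ⊥ ∧ U₂ = ⊥) → ¬(U₁ = ⊤ ∧ U₂ = ⊤) →
    3 * Module.finrank ℂ U₁ < 2 * Module.finrank ℂ U₂

/-- The three maximal minors of a 2×3 matrix of polynomials: `minorP m k` is (up to sign) the
2×2 minor obtained by deleting the `k`-th column. -/
def minorP (m : Matrix (Fin 2) (Fin 3) Pxyz) (k : Fin 3) : Pxyz :=
  m 0 (k + 1) * m 1 (k + 2) - m 0 (k + 2) * m 1 (k + 1)

/-- The three maximal minors of a 2×3 matrix of linear forms; they are elements of `S²W`,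
i.e. homogeneous quadratic polynomials in ℂ[x,y,z]. -/
def minor (r : Matrix (Fin 2) (Fin 3) (Fin 3 → ℂ)) (k : Fin 3) : Pxyz :=
  minorP (Matrix.of fun i j => toPoly (r i j)) k

/-- `H_r ⊆ S²W`, the linear span of the three maximal minors of `r`. -/
def Hr (r : Matrix (Fin 2) (Fin 3) (Fin 3 → ℂ)) : Submodule ℂ Pxyz :=
  Submodule.span ℂ (Set.range (minor r))

/-!
As `dim U₁ ∈ {0, 1, 2}`, the stability inequality has content only for `dim U₁ = 1`, where it
asks `dim U₂ ≥ 2`, and for `U₁ = ℂ²`, where it forbids `U₂ ≠ ℂ³`. The smallest admissible `U₂`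
is the span of the `ρ_k v` when `U₁ = ⟨v⟩`, and the sum of the images of the `ρ_k` when `U₁ = ℂ²`.
-/

section FamilyOfMaps

variable {K V W ι : Type*} [Field K] [AddCommGroup V] [Module K V] [AddCommGroup W] [Module K W]
  (ρ : ι → V →ₗ[K] W)

theorem map_span_singleton_le_span_range_apply (v : V) (k : ι) :
    (Submodule.span K {v}).map (ρ k) ≤ Submodule.span K (Set.range fun k => ρ k v) := by
  rw [Submodule.map_span, Set.image_singleton, Submodule.span_le, Set.singleton_subset_iff]
  exact Submodule.subset_span ⟨k, rfl⟩

theorem span_range_apply_le_of_map_le {U₁ : Submodule K V} {U₂ : Submodule K W}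
    (hmap : ∀ k, U₁.map (ρ k) ≤ U₂) {v : V} (hv : v ∈ U₁) :
    Submodule.span K (Set.range fun k => ρ k v) ≤ U₂ := by
  rw [Submodule.span_le]
  rintro _ ⟨k, rfl⟩
  exact hmap k ⟨v, hv, rfl⟩

theorem iSup_range_le_iff {U₂ : Submodule K W} :
    ⨆ k, LinearMap.range (ρ k) ≤ U₂ ↔ ∀ k, (⊤ : Submodule K V).map (ρ k) ≤ U₂ := by
  simp only [iSup_le_iff, LinearMap.range_eq_map]

end FamilyOfMaps

theorem finrank_submodule_fin_fun_le {K : Type*} [Field K] {n : ℕ}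
    (U : Submodule K (Fin n → K)) : Module.finrank K U ≤ n := by
  simpa using Submodule.finrank_le U

section KStable

variable {ρ : Fin 3 → ((Fin 2 → ℂ) →ₗ[ℂ] (Fin 3 → ℂ))}

theorem KStable.iSup_range_eq_top (hs : KStable ρ) : ⨆ k, LinearMap.range (ρ k) = ⊤ := by
  by_contra hne
  have hlt := hs ⊤ _ ((iSup_range_le_iff ρ).1 le_rfl) (by simp) (fun h => hne h.2)
  have hU₂ := finrank_submodule_fin_fun_le (⨆ k, LinearMap.range (ρ k))
  simp only [finrank_top, Module.finrank_fin_fun] at hlt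
  omega

theorem KStable.two_le_finrank_span_range_apply (hs : KStable ρ) {v : Fin 2 → ℂ} (hv : v ≠ 0) :
    2 ≤ Module.finrank ℂ (Submodule.span ℂ (Set.range fun k => ρ k v)) := by
  set S := Submodule.span ℂ (Set.range fun k => ρ k v)
  by_cases htop : S = ⊤
  · rw [htop]; simp
  have hlt := hs (Submodule.span ℂ {v}) S (map_span_singleton_le_span_range_apply ρ v)
    (fun h => hv (by simpa using h.1)) (fun h => htop h.2)
  rw [finrank_span_singleton hv] at hlt
  omega

theorem kStable_of_iSup_range_eq_top (hrange : ⨆ k, LinearMap.range (ρ k) = ⊤)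
    (hspan : ∀ v : Fin 2 → ℂ, v ≠ 0 →
      2 ≤ Module.finrank ℂ (Submodule.span ℂ (Set.range fun k => ρ k v))) :
    KStable ρ := by
  intro U₁ U₂ hmap hbot htop
  have hU₁ := finrank_submodule_fin_fun_le U₁
  interval_cases h : Module.finrank ℂ U₁
  · have hU₂ : U₂ ≠ ⊥ := fun hb => hbot ⟨Submodule.finrank_eq_zero.mp h, hb⟩
    have := Submodule.finrank_eq_zero.not.mpr hU₂
    omega
  · obtain ⟨v, hvU, hv⟩ := Submodule.exists_mem_ne_zero_of_ne_bot
      (Submodule.one_le_finrank_iff.mp h.ge)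
    have := (hspan v hv).trans (Submodule.finrank_mono (span_range_apply_le_of_map_le ρ hmap hvU))
    omega
  · have hU₁top : U₁ = ⊤ := Submodule.eq_top_of_finrank_eq (by simpa using h)
    subst hU₁top
    exact absurd ⟨rfl, top_le_iff.mp (hrange ▸ (iSup_range_le_iff ρ).2 hmap)⟩ htop

end KStable

/-- A representation `(ρ₁,ρ₂,ρ₃)` of the 3-Kronecker quiver of dimension
vector `(2,3)` is stable if and only if the images of `ρ₁, ρ₂, ρ₃` together span `ℂ³` and,
for every nonzero `v ∈ ℂ²`, the span of `ρ₁(v), ρ₂(v), ρ₃(v)` has dimension at least 2. -/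
theorem stmt0 (ρ : Fin 3 → ((Fin 2 → ℂ) →ₗ[ℂ] (Fin 3 → ℂ))) :
    KStable ρ ↔
      ((⨆ k, LinearMap.range (ρ k)) = ⊤ ∧
        ∀ v : Fin 2 → ℂ, v ≠ 0 →
          2 ≤ Module.finrank ℂ (Submodule.span ℂ (Set.range fun k => ρ k v))) :=
  ⟨fun hs => ⟨hs.iSup_range_eq_top, fun _ hv => hs.two_le_finrank_span_range_apply hv⟩,
    fun ⟨hrange, hspan⟩ => kStable_of_iSup_range_eq_top hrange hspan⟩
end
end

section
/- A representation of the 3-Kronecker quiver of dimension vector (2,3) determined by a 2×3 matrix r with entries in W is stable if and only if the three maximal minors of r are linearly independent in S²W. -/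
open MvPolynomial TensorProduct

noncomputable section

/-!
The subrepresentations that can violate stability have dimension vectors `(1,1)` and `(2,2)`:
a nonzero `v ∈ ℂ²` all of whose images `ρₖ v` lie on one line, or a nonzero `c ∈ ℂ³` killing all
the images, i.e. a constant linear relation among the columns of `r`. Writing `R₀, R₁` for the
rows of `r` as vectors of linear forms, the maximal minors are `R₀ ⨯₃ R₁`. A relation
`g ⬝ᵥ (R₀ ⨯₃ R₁) = 0` with `g = p ⨯₃ q` becomes, by Binet–Cauchy, the vanishing of the determinant
of the 2×2 matrix of linear forms `(p ⬝ᵥ Rᵢ, q ⬝ᵥ Rᵢ)`. Such a matrix has a constant row or column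
relation, because a linear form dividing a product of two linear forms is proportional to one of
them; and these relations are exactly the two destabilizing configurations. Conversely, a line
`ℂ u` containing all `ρₖ v` gives `u ⬝ᵥ (R₀ ⨯₃ R₁) = 0`, and a column relation `c` gives
`(c ⨯₃ e) ⬝ᵥ (R₀ ⨯₃ R₁) = 0` for every `e` independent of `c`.
-/

open Matrix Module Submodule

section CrossProduct

lemma map_crossProduct {R S : Type*} [CommRing R] [CommRing S] (f : R →+* S)
    (u v : Fin 3 → R) :
    (fun i => f ((u ⨯₃ v) i)) = (fun i => f (u i)) ⨯₃ (fun i => f (v i)) := by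
  ext i; fin_cases i <;> simp [cross_apply]

variable {K : Type*} [Field K]

lemma exists_smul_eq_of_cross_eq_zero {u w : Fin 3 → K} (hu : u ≠ 0) (h : u ⨯₃ w = 0) :
    ∃ t : K, t • u = w := by
  by_contra! h'
  exact crossProduct_ne_zero_iff_linearIndependent.2 ((LinearIndependent.pair_iff' hu).2 h') h

lemma mem_span_cross_of_dotProduct_eq_zero {p q x : Fin 3 → K} (hpq : p ⨯₃ q ≠ 0)
    (hp : p ⬝ᵥ x = 0) (hq : q ⬝ᵥ x = 0) : x ∈ K ∙ (p ⨯₃ q) :=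
  mem_span_singleton.2 <| exists_smul_eq_of_cross_eq_zero hpq <| by
    rw [cross_cross_eq_smul_sub_smul, hp, hq, zero_smul, zero_smul, sub_zero]

lemma exists_cross_eq {g : Fin 3 → K} (hg : g ≠ 0) : ∃ p q : Fin 3 → K, p ⨯₃ q = g := by
  obtain ⟨i, hi⟩ := Function.ne_iff.1 hg
  fin_cases i <;> dsimp at hi
  · exact ⟨![-(g 1) / g 0, 1, 0], ![-(g 2), 0, g 0], by
      ext k; fin_cases k <;> simp [cross_apply, hi]⟩
  · exact ⟨![1, -(g 0) / g 1, 0], ![0, g 2, -(g 1)], by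
      ext k; fin_cases k <;> simp [cross_apply, hi]⟩
  · exact ⟨![0, 1, -(g 1) / g 2], ![-(g 2), 0, g 0], by
      ext k; fin_cases k <;> simp [cross_apply, hi]⟩

end CrossProduct

lemma Submodule.exists_le_span_singleton_of_finrank_le_one {K V : Type*} [Field K]
    [AddCommGroup V] [Module K V] [FiniteDimensional K V] [Nontrivial V] (U : Submodule K V)
    (h : finrank K U ≤ 1) : ∃ u ≠ 0, U ≤ K ∙ u := by
  obtain ⟨u, hu⟩ := ((U.finrank_le_one_iff_isPrincipal).1 h).principal
  rcases eq_or_ne u 0 with rfl | hu₀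
  · obtain ⟨w, hw⟩ := exists_ne (0 : V)
    exact ⟨w, hw, by simp [hu]⟩
  · exact ⟨u, hu₀, hu.le⟩

def toPolyₗ : (Fin 3 → ℂ) →ₗ[ℂ] Pxyz where
  toFun := toPoly
  map_add' v w := by simp [toPoly, add_mul, Finset.sum_add_distrib]
  map_smul' c w := by simp [toPoly, Finset.mul_sum, mul_assoc, smul_eq_C_mul]

@[simp] lemma toPolyₗ_apply (w : Fin 3 → ℂ) : toPolyₗ w = toPoly w := rfl

lemma toPoly_smul (c : ℂ) (w : Fin 3 → ℂ) : toPoly (c • w) = C c * toPoly w := by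
  rw [← smul_eq_C_mul]; exact toPolyₗ.map_smul c w

lemma eval_toPoly (w e : Fin 3 → ℂ) : eval e (toPoly w) = w ⬝ᵥ e := by
  simp [toPoly, dotProduct]

lemma toPoly_injective : Function.Injective toPoly := fun w w' h => funext fun k => by
  simpa [eval_toPoly] using congrArg (eval (Pi.single k 1)) h

lemma toPoly_eq_zero {w : Fin 3 → ℂ} : toPoly w = 0 ↔ w = 0 :=
  map_eq_zero_iff toPolyₗ toPoly_injective

@[simp] lemma toPoly_zero : toPoly 0 = 0 := toPoly_eq_zero.2 rfl

lemma toPoly_sum_smul {ι : Type*} [Fintype ι] (p : ι → ℂ) (w : ι → Fin 3 → ℂ) :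
    toPoly (∑ j, p j • w j) = ∑ j, C (p j) * toPoly (w j) := by
  change toPolyₗ _ = _
  simp [map_sum, smul_eq_C_mul]

lemma cross_eq_zero_or_of_toPoly_mul_eq {a b c d : Fin 3 → ℂ}
    (h : toPoly a * toPoly d = toPoly b * toPoly c) : a ⨯₃ b = 0 ∨ a ⨯₃ c = 0 := by
  -- On the plane `{a ⨯₃ e}` the form `a` vanishes, and `b ⬝ᵥ a ⨯₃ e = -(a ⨯₃ b) ⬝ᵥ e`.
  have hprod : toPoly (a ⨯₃ b) * toPoly (a ⨯₃ c) = 0 := MvPolynomial.funext fun e => by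
    have := congrArg (eval (a ⨯₃ e)) h
    simp only [map_mul, map_zero, eval_toPoly, dot_self_cross, zero_mul] at this ⊢
    simp only [cross_apply, vec3_dotProduct] at this ⊢
    dsimp only [cons_val] at this ⊢
    linear_combination -this
  simpa [toPoly_eq_zero] using hprod

lemma smul_eq_of_toPoly_mul_eq {a b c d : Fin 3 → ℂ} {t : ℂ} (ha : a ≠ 0) (hb : t • a = b)
    (h : toPoly a * toPoly d = toPoly b * toPoly c) : t • c = d := by
  refine toPoly_injective (mul_left_cancel₀ (toPoly_eq_zero.not.2 ha) ?_)
  rw [h, ← hb, toPoly_smul, toPoly_smul]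
  ring

/-- Rows and columns refer to the 2×2 matrix `!![a, b; c, d]` of linear forms. -/
lemma exists_row_or_column_relation {a b c d : Fin 3 → ℂ}
    (h : toPoly a * toPoly d = toPoly b * toPoly c) :
    (∃ s t : ℂ, (s ≠ 0 ∨ t ≠ 0) ∧ s • a + t • c = 0 ∧ s • b + t • d = 0) ∨
      (∃ s t : ℂ, (s ≠ 0 ∨ t ≠ 0) ∧ s • a + t • b = 0 ∧ s • c + t • d = 0) := by
  rcases eq_or_ne a 0 with rfl | ha
  · have : toPoly b * toPoly c = 0 := by rw [← h, toPoly_zero, zero_mul]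
    rcases mul_eq_zero.1 this with hb | hc
    · exact .inl ⟨1, 0, .inl one_ne_zero, by simp, by simp [toPoly_eq_zero.1 hb]⟩
    · exact .inr ⟨1, 0, .inl one_ne_zero, by simp, by simp [toPoly_eq_zero.1 hc]⟩
  rcases cross_eq_zero_or_of_toPoly_mul_eq h with hb | hc
  · obtain ⟨t, rfl⟩ := exists_smul_eq_of_cross_eq_zero ha hb
    have hd := smul_eq_of_toPoly_mul_eq ha rfl h
    exact .inr ⟨t, -1, .inr (by simp), by simp, by simp [hd]⟩
  · obtain ⟨t, rfl⟩ := exists_smul_eq_of_cross_eq_zero ha hc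
    have hd := smul_eq_of_toPoly_mul_eq ha rfl (by rw [h, mul_comm])
    exact .inl ⟨t, -1, .inr (by simp), by simp, by simp [hd]⟩

section Stability

variable (ρ : Fin 3 → (Fin 2 → ℂ) →ₗ[ℂ] (Fin 3 → ℂ))

/- The destabilizing subrepresentations: `(ℂ v, ℂ u)` of dimension vector `(1,1)` and
`(ℂ², ker (c ⬝ᵥ ·))` of dimension vector `(2,2)`. -/
def HasSubrepOneOne : Prop :=
  ∃ v ≠ 0, ∃ u ≠ 0, ∀ k, ρ k v ∈ ℂ ∙ u

def HasSubrepTwoTwo : Prop :=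
  ∃ c ≠ 0, ∀ k v, c ⬝ᵥ ρ k v = 0

variable {ρ}

lemma not_kStable_of_hasSubrepOneOne (h : HasSubrepOneOne ρ) : ¬KStable ρ := by
  obtain ⟨v, hv, u, hu, hvu⟩ := h
  intro hK
  have hv₁ := finrank_span_singleton (K := ℂ) hv
  have hlt := hK (ℂ ∙ v) (ℂ ∙ u)
    (fun k => map_le_iff_le_comap.2 ((span_singleton_le_iff_mem _ _).2 (hvu k)))
    (fun h => hv (span_singleton_eq_bot.1 h.1))
    (fun h => by rw [h.1, finrank_top] at hv₁; simp at hv₁)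
  rw [hv₁, finrank_span_singleton hu] at hlt
  omega

lemma not_kStable_of_hasSubrepTwoTwo (h : HasSubrepTwoTwo ρ) : ¬KStable ρ := by
  obtain ⟨c, hc, hcρ⟩ := h
  intro hK
  have hlt := hK ⊤ (LinearMap.ker (dotProductEquiv ℂ (Fin 3) c))
    (fun k => by rintro _ ⟨v, -, rfl⟩; exact hcρ k v)
    (fun h => top_ne_bot h.1)
    (fun h => hc (by simpa using LinearMap.ker_eq_top.1 h.2))
  have := (LinearMap.ker (dotProductEquiv ℂ (Fin 3) c)).finrank_le
  simp only [finrank_top, finrank_fin_fun] at hlt this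
  omega

lemma hasSubrep_of_not_kStable (h : ¬KStable ρ) : HasSubrepOneOne ρ ∨ HasSubrepTwoTwo ρ := by
  simp only [KStable, not_forall, not_lt] at h
  obtain ⟨U₁, U₂, hmap, hbot, htop, hdim⟩ := h
  have hU₁ : finrank ℂ U₁ ≤ 2 := by simpa using U₁.finrank_le
  interval_cases h₁ : finrank ℂ U₁
  · exact absurd ⟨finrank_eq_zero.1 h₁, finrank_eq_zero.1 (by omega)⟩ hbot
  · obtain ⟨v, hvU, hv⟩ := U₁.exists_mem_ne_zero_of_ne_bot (by rintro rfl; simp at h₁)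
    obtain ⟨u, hu, hU₂⟩ := U₂.exists_le_span_singleton_of_finrank_le_one (by omega)
    exact .inl ⟨v, hv, u, hu, fun k => hU₂ (hmap k (mem_map_of_mem hvU))⟩
  · have hU₁ : U₁ = ⊤ := eq_top_of_finrank_eq (by simpa using h₁)
    obtain ⟨f, hf, hU₂⟩ := U₂.exists_le_ker_of_lt_top (lt_top_iff_ne_top.2 fun h => htop ⟨hU₁, h⟩)
    refine .inr ⟨(dotProductEquiv ℂ (Fin 3)).symm f, by simpa using hf, fun k v => ?_⟩
    have := hU₂ (hmap k (mem_map_of_mem (hU₁ ▸ mem_top : v ∈ U₁)))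
    rwa [← dotProductEquiv_apply_apply, LinearEquiv.apply_symm_apply]

end Stability

section Minors

variable (r : Matrix (Fin 2) (Fin 3) (Fin 3 → ℂ))

def polyRow (i : Fin 2) : Fin 3 → Pxyz := fun j => toPoly (r i j)

lemma minor_eq_cross : minor r = polyRow r 0 ⨯₃ polyRow r 1 := by
  ext k; fin_cases k <;> rfl

lemma linearIndependent_minor_iff : LinearIndependent ℂ (minor r) ↔
    ∀ g : Fin 3 → ℂ, (fun k => C (g k)) ⬝ᵥ minor r = 0 → g = 0 := by
  simp only [Fintype.linearIndependent_iff, dotProduct, smul_eq_C_mul, funext_iff, Pi.zero_apply]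

lemma repOf_apply (k : Fin 3) (v : Fin 2 → ℂ) (j : Fin 3) :
    repOf r k v j = (∑ i, v i • r i j) k := by
  simp [repOf]

lemma dotProduct_repOf (p : Fin 3 → ℂ) (k : Fin 3) (v : Fin 2 → ℂ) :
    p ⬝ᵥ repOf r k v = ∑ i, v i * (∑ j, p j • r i j) k := by
  simp only [dotProduct, repOf_apply, Finset.sum_apply, Pi.smul_apply, smul_eq_mul,
    Finset.mul_sum]
  rw [Finset.sum_comm]
  simp only [mul_left_comm]

lemma C_dotProduct_polyRow (p : Fin 3 → ℂ) (i : Fin 2) :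
    (fun j => C (p j)) ⬝ᵥ polyRow r i = toPoly (∑ j, p j • r i j) := by
  rw [toPoly_sum_smul]; rfl

lemma hasSubrepTwoTwo_repOf_iff :
    HasSubrepTwoTwo (repOf r) ↔ ∃ c : Fin 3 → ℂ, c ≠ 0 ∧ ∀ i, ∑ j, c j • r i j = 0 := by
  refine exists_congr fun c => and_congr_right fun _ =>
    ⟨fun h i => ?_, fun h k v => by
      simp only [dotProduct_repOf, h, Pi.zero_apply, mul_zero, Finset.sum_const_zero]⟩
  ext k
  simpa [dotProduct_repOf, Pi.single_apply] using h k (Pi.single i 1)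

lemma not_linearIndependent_of_hasSubrepOneOne (h : HasSubrepOneOne (repOf r)) :
    ¬LinearIndependent ℂ (minor r) := by
  obtain ⟨v, hv, u, hu, hvu⟩ := h
  choose a ha using fun k => mem_span_singleton.1 (hvu k)
  set R := polyRow r
  set U : Fin 3 → Pxyz := fun j => C (u j)
  have hrow : (C (v 0) : Pxyz) • R 0 + (C (v 1) : Pxyz) • R 1 = toPoly a • U := by
    ext1 j
    have : ∑ i, v i • r i j = u j • a := by
      ext k; rw [← repOf_apply, ← ha k]; simp [mul_comm]
    have := congrArg toPoly this
    rw [toPoly_sum_smul, toPoly_smul, Fin.sum_univ_two] at this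
    simpa [R, U, polyRow, mul_comm] using this
  have hdot : ∀ i, C (v i) * (U ⬝ᵥ R 0 ⨯₃ R 1) = 0 := by
    intro i; fin_cases i
    · have := congrArg (fun x => U ⬝ᵥ x ⨯₃ R 1) hrow
      simpa [cross_self, dot_self_cross] using this
    · have := congrArg (fun x => U ⬝ᵥ R 0 ⨯₃ x) hrow
      simpa [cross_self, dot_cross_self] using this
  obtain ⟨i, hi⟩ := Function.ne_iff.1 hv
  rw [linearIndependent_minor_iff, minor_eq_cross]
  exact fun H => hu (H u ((mul_eq_zero.1 (hdot i)).resolve_left (by simpa using hi)))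

lemma not_linearIndependent_of_hasSubrepTwoTwo (h : HasSubrepTwoTwo (repOf r)) :
    ¬LinearIndependent ℂ (minor r) := by
  obtain ⟨c, hc, hcr⟩ := (hasSubrepTwoTwo_repOf_iff r).1 h
  obtain ⟨e, he⟩ := exists_linearIndependent_pair_of_one_lt_finrank (R := ℂ) (by simp) hc
  rw [linearIndependent_minor_iff, minor_eq_cross]
  intro H
  refine crossProduct_ne_zero_iff_linearIndependent.2 he (H _ ?_)
  rw [map_crossProduct, cross_dot_cross]
  simp [C_dotProduct_polyRow, hcr]

lemma hasSubrep_of_not_linearIndependent (h : ¬LinearIndependent ℂ (minor r)) :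
    HasSubrepOneOne (repOf r) ∨ HasSubrepTwoTwo (repOf r) := by
  obtain ⟨g, hrel, hg⟩ : ∃ g : Fin 3 → ℂ, (fun k => C (g k)) ⬝ᵥ minor r = 0 ∧ g ≠ 0 := by
    simpa [linearIndependent_minor_iff] using h
  obtain ⟨p, q, rfl⟩ := exists_cross_eq hg
  -- Binet–Cauchy: the relation says that the 2×2 matrix `(p ⬝ᵥ Rᵢ, q ⬝ᵥ Rᵢ)` has determinant 0.
  rw [minor_eq_cross, map_crossProduct, cross_dot_cross, sub_eq_zero] at hrel
  simp only [C_dotProduct_polyRow] at hrel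
  rcases exists_row_or_column_relation hrel with ⟨s, t, hst, h0, h1⟩ | ⟨s, t, hst, hp, hq⟩
  · refine .inr ((hasSubrepTwoTwo_repOf_iff r).2 ⟨s • p + t • q, ?_, fun i => ?_⟩)
    · intro h
      have hpq := crossProduct_ne_zero_iff_linearIndependent.1 hg
      have := LinearIndependent.pair_iff.1 hpq s t h
      exact hst.elim (· this.1) (· this.2)
    · fin_cases i
      · simpa [add_smul, Finset.sum_add_distrib, mul_smul, ← Finset.smul_sum] using h0
      · simpa [add_smul, Finset.sum_add_distrib, mul_smul, ← Finset.smul_sum] using h1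
  · refine .inl ⟨![s, t], ?_, p ⨯₃ q, hg, fun k => mem_span_cross_of_dotProduct_eq_zero hg ?_ ?_⟩
    · exact fun h => hst.elim (· (by simpa using congrFun h 0)) (· (by simpa using congrFun h 1))
    · simpa [dotProduct_repOf, Fin.sum_univ_two] using congrFun hp k
    · simpa [dotProduct_repOf, Fin.sum_univ_two] using congrFun hq k

end Minors

/-- The representation of the 3-Kronecker quiver of dimension vector `(2,3)`
determined by a 2×3 matrix `r` with entries in `W` is stable if and only if the three maximal
minors of `r` are linearly independent in `S²W`. -/
theorem stmt1 (r : Matrix (Fin 2) (Fin 3) (Fin 3 → ℂ)) :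
    KStable (repOf r) ↔ LinearIndependent ℂ (minor r) := by
  refine not_iff_not.1 ⟨fun h => ?_, fun h => ?_⟩
  · rcases hasSubrep_of_not_kStable h with h11 | h22
    · exact not_linearIndependent_of_hasSubrepOneOne r h11
    · exact not_linearIndependent_of_hasSubrepTwoTwo r h22
  · rcases hasSubrep_of_not_linearIndependent r h with h11 | h22
    · exact not_kStable_of_hasSubrepOneOne h11
    · exact not_kStable_of_hasSubrepTwoTwo h22
end
end

section
/- Let (a,b,c) ∈ ℂ³ and let r be the 2×3 matrix with rows (x, y, z) and (ay, bz, cx), whose entries are linear forms in ℂ[x,y,z]. The representation of the 3-Kronecker quiver of dimension vector (2,3) determined by r is stable if and only if at least two of a, b, c are nonzero. -/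
/-!
For a line `U₁ = ℂ v` the smallest admissible `U₂` is the span of `ρ₀ v, ρ₁ v, ρ₂ v`, and for
`U₁ = ℂ²` it is the span of all images; so stability means that every `v ≠ 0` has two linearly
independent images and that the images span `ℂ³`. Here
`ρ_k v = v₀ e_k + v₁ (c, a, b)_k e_{k+2}`: thus `ρ_k e₀ = e_k`, and `ρ₀ v, ρ₁ v` are independent
when `v₀ ≠ 0`. For `v = e₁` the images are `c e₂, a e₀, b e₁`, which span a space whose dimension
is the number of nonzero coefficients among `a, b, c`.
-/

open MvPolynomial TensorProduct

noncomputable section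

open Module Submodule

section LinearAlgebra

variable {K V : Type*} [Field K] [AddCommGroup V] [Module K V]

theorem linearIndependent_pair_of_apply_eq_zero {ι : Type*} {x y : ι → K} {i j : ι}
    (hxi : x i = 0) (hyi : y i ≠ 0) (hxj : x j ≠ 0) : LinearIndependent K ![x, y] := by
  refine LinearIndependent.pair_iff.2 fun s t hst => ?_
  have hi := congrFun hst i
  have hj := congrFun hst j
  simp only [Pi.add_apply, Pi.smul_apply, smul_eq_mul, Pi.zero_apply, hxi, mul_zero,
    zero_add] at hi hj
  obtain rfl : t = 0 := (mul_eq_zero.1 hi).resolve_right hyi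
  simp only [zero_mul, add_zero] at hj
  exact ⟨(mul_eq_zero.1 hj).resolve_right hxj, rfl⟩

theorem two_le_finrank_of_linearIndependent_pair [FiniteDimensional K V] {U : Submodule K V}
    {x y : V} (hx : x ∈ U) (hy : y ∈ U) (h : LinearIndependent K ![x, y]) :
    2 ≤ finrank K U := by
  have hle : span K (Set.range ![x, y]) ≤ U := by
    rw [span_le, Matrix.range_cons, Matrix.range_cons, Matrix.range_empty]
    simp [Set.insert_subset_iff, hx, hy]
  calc 2 = finrank K (span K (Set.range ![x, y])) := by simp [finrank_span_eq_card h]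
    _ ≤ finrank K U := finrank_mono hle

theorem exists_ne_of_two_le_finrank_span_range {ι : Type*} {f : ι → V}
    (h : 2 ≤ finrank K (span K (Set.range f))) : ∃ k l, k ≠ l ∧ f k ≠ 0 ∧ f l ≠ 0 := by
  by_contra! hf
  by_cases hzero : ∀ k, f k = 0
  · rw [span_eq_bot.2 (Set.forall_mem_range.2 hzero), finrank_bot] at h
    omega
  push Not at hzero
  obtain ⟨k, hk⟩ := hzero
  have hle : span K (Set.range f) ≤ K ∙ f k := by
    rw [span_le]
    rintro _ ⟨l, rfl⟩
    by_cases hl : l = k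
    · exact hl ▸ mem_span_singleton_self _
    · simp [hf k l (Ne.symm hl) hk]
  have := finrank_mono hle
  rw [finrank_span_singleton hk] at this
  omega

end LinearAlgebra

theorem kStable_iff (ρ : Fin 3 → (Fin 2 → ℂ) →ₗ[ℂ] (Fin 3 → ℂ)) :
    KStable ρ ↔ (∀ v ≠ 0, 2 ≤ finrank ℂ (span ℂ (Set.range fun k => ρ k v))) ∧
      ⨆ k, LinearMap.range (ρ k) = ⊤ := by
  constructor
  · intro hρ
    constructor
    · intro v hv
      have hline := hρ (ℂ ∙ v) (span ℂ (Set.range fun k => ρ k v))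
        (fun k => by
          rw [map_span, Set.image_singleton, span_le, Set.singleton_subset_iff]
          exact subset_span ⟨k, rfl⟩)
        (fun h => hv (span_singleton_eq_bot.1 h.1))
        (fun h => by
          have := finrank_span_singleton (K := ℂ) hv
          rw [h.1, finrank_top, finrank_fin_fun] at this
          omega)
      rw [finrank_span_singleton hv] at hline
      omega
    · by_contra hne
      have hall := hρ ⊤ (⨆ k, LinearMap.range (ρ k))
        (fun k => map_top (ρ k) ▸ le_iSup (fun k => LinearMap.range (ρ k)) k)
        (fun h => top_ne_bot h.1) (fun h => hne h.2)
      have := finrank_le (⨆ k, LinearMap.range (ρ k))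
      rw [finrank_top, finrank_fin_fun] at hall
      rw [finrank_fin_fun] at this
      omega
  · rintro ⟨hline, hspan⟩ U₁ U₂ hmap hbot htop
    by_cases h₀ : U₁ = ⊥
    · rw [h₀, finrank_bot]
      exact Nat.mul_pos two_pos (Nat.pos_of_ne_zero fun h => hbot ⟨h₀, finrank_eq_zero.1 h⟩)
    have h₂ : U₁ ≠ ⊤ := fun h => htop ⟨h, top_le_iff.1 <|
      hspan ▸ iSup_le fun k => map_top (ρ k) ▸ h ▸ hmap k⟩
    have hlt := finrank_lt h₂
    rw [finrank_fin_fun] at hlt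
    obtain ⟨v, hvU, hv⟩ := (Submodule.ne_bot_iff U₁).1 h₀
    have hle : span ℂ (Set.range fun k => ρ k v) ≤ U₂ :=
      span_le.2 <| Set.range_subset_iff.2 fun k => hmap k ⟨v, hvU, rfl⟩
    have := (hline v hv).trans (finrank_mono hle)
    have := finrank_eq_zero.not.2 h₀
    omega

def cyclicMatrix (a b c : ℂ) : Matrix (Fin 2) (Fin 3) (Fin 3 → ℂ) :=
  Matrix.of ![![Pi.single 0 1, Pi.single 1 1, Pi.single 2 1],
    ![Pi.single 1 a, Pi.single 2 b, Pi.single 0 c]]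

theorem repOf_cyclicMatrix_apply (a b c : ℂ) (k : Fin 3) (v : Fin 2 → ℂ) :
    repOf (cyclicMatrix a b c) k v =
      v 0 • Pi.single k 1 + (v 1 * ![c, a, b] k) • Pi.single (k + 2) 1 := by
  funext j
  fin_cases k <;> fin_cases j <;>
    simp [repOf, cyclicMatrix, Fin.sum_univ_two, mul_comm]

theorem iSup_range_repOf_cyclicMatrix (a b c : ℂ) :
    ⨆ k, LinearMap.range (repOf (cyclicMatrix a b c) k) = ⊤ := by
  rw [eq_top_iff, ← (Pi.basisFun ℂ (Fin 3)).span_eq, span_le]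
  rintro _ ⟨k, rfl⟩
  exact mem_iSup_of_mem k ⟨Pi.single 0 1, by simp [repOf_cyclicMatrix_apply]⟩

theorem two_le_finrank_span_repOf_cyclicMatrix {a b c : ℂ}
    (habc : (a ≠ 0 ∧ b ≠ 0) ∨ (a ≠ 0 ∧ c ≠ 0) ∨ (b ≠ 0 ∧ c ≠ 0)) {v : Fin 2 → ℂ} (hv : v ≠ 0) :
    2 ≤ finrank ℂ (span ℂ (Set.range fun k => repOf (cyclicMatrix a b c) k v)) := by
  have mem (k : Fin 3) : repOf (cyclicMatrix a b c) k v ∈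
      span ℂ (Set.range fun k => repOf (cyclicMatrix a b c) k v) := subset_span ⟨k, rfl⟩
  by_cases hv₀ : v 0 = 0
  · have hv₁ : v 1 ≠ 0 := fun hv₁ => hv (funext fun i => by fin_cases i <;> assumption)
    rcases habc with ⟨ha, hb⟩ | ⟨ha, hc⟩ | ⟨hb, hc⟩
    · refine two_le_finrank_of_linearIndependent_pair (mem 1) (mem 2)
        (linearIndependent_pair_of_apply_eq_zero (i := 1) (j := 0) ?_ ?_ ?_) <;>
      simp [repOf_cyclicMatrix_apply, *]
    · refine two_le_finrank_of_linearIndependent_pair (mem 1) (mem 0)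
        (linearIndependent_pair_of_apply_eq_zero (i := 2) (j := 0) ?_ ?_ ?_) <;>
      simp [repOf_cyclicMatrix_apply, *]
    · refine two_le_finrank_of_linearIndependent_pair (mem 2) (mem 0)
        (linearIndependent_pair_of_apply_eq_zero (i := 2) (j := 1) ?_ ?_ ?_) <;>
      simp [repOf_cyclicMatrix_apply, *]
  · refine two_le_finrank_of_linearIndependent_pair (mem 0) (mem 1)
      (linearIndependent_pair_of_apply_eq_zero (i := 1) (j := 0) ?_ ?_ ?_) <;>
    simp [repOf_cyclicMatrix_apply, *]

/-- Let `(a,b,c) ∈ ℂ³` and let `r` be the 2×3 matrix with rows `(x, y, z)`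
and `(ay, bz, cx)`.  The representation of the 3-Kronecker quiver of dimension vector `(2,3)`
determined by `r` is stable if and only if at least two of `a, b, c` are nonzero. -/
theorem stmt10 (a b c : ℂ) :
    KStable (repOf (Matrix.of
        ![![Pi.single (0 : Fin 3) (1 : ℂ), Pi.single (1 : Fin 3) (1 : ℂ),
            Pi.single (2 : Fin 3) (1 : ℂ)],
          ![Pi.single (1 : Fin 3) a, Pi.single (2 : Fin 3) b, Pi.single (0 : Fin 3) c]])) ↔
      ((a ≠ 0 ∧ b ≠ 0) ∨ (a ≠ 0 ∧ c ≠ 0) ∨ (b ≠ 0 ∧ c ≠ 0)) := by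
  change KStable (repOf (cyclicMatrix a b c)) ↔ _
  rw [kStable_iff, and_iff_left (iSup_range_repOf_cyclicMatrix a b c)]
  refine ⟨fun h => ?_, fun habc v hv => two_le_finrank_span_repOf_cyclicMatrix habc hv⟩
  obtain ⟨k, l, hkl, hk, hl⟩ :=
    exists_ne_of_two_le_finrank_span_range (h (Pi.single 1 1) (by simp))
  fin_cases k <;> fin_cases l <;> simp_all [repOf_cyclicMatrix_apply]
end
end

section
/- Let R be a commutative ring and C a cochain complex of R-modules indexed by ℤ with Cʲ = 0 for all j > q and with C^q finitely generated. If the cohomology H^q(C) is nonzero, then there exists a maximal ideal m of R such that H^q(C ⊗_R R/m) ≠ 0, where C ⊗_R R/m denotes the cochain complex with terms Cʲ ⊗_R R/m and the induced differentials. -/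
/-!
The cokernel `Q` of `d : C^{q-1} → C^q` is a nonzero finitely generated module, so by Nakayama
`Q ⊗ R/m = Q/mQ ≠ 0` for any maximal ideal `m` containing its annihilator; by right exactness of
`- ⊗ R/m`, `Q ⊗ R/m` is the cokernel of `d ⊗ R/m`.
-/

open TensorProduct

namespace Module

variable (R M : Type*) [CommRing R] [AddCommGroup M] [Module R M] [Module.Finite R M] [Nontrivial M]

theorem exists_isMaximal_smul_top_ne_top :
    ∃ m : Ideal R, m.IsMaximal ∧ m • (⊤ : Submodule R M) ≠ ⊤ := by
  obtain ⟨m, hm, hann⟩ := Ideal.exists_le_maximal (annihilator R M)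
    (annihilator_eq_top_iff.not.mpr (not_subsingleton M))
  refine ⟨m, hm, fun htop => hm.ne_top ?_⟩
  obtain ⟨r, hr1, hr0⟩ := Submodule.exists_sub_one_mem_and_smul_eq_zero_of_fg_of_le_smul m ⊤
    Module.Finite.fg_top htop.ge
  have hrm : r ∈ m := hann (mem_annihilator.mpr fun x => hr0 x trivial)
  exact (Ideal.eq_top_iff_one m).mpr (by simpa using m.sub_mem hrm hr1)

theorem exists_isMaximal_nontrivial_tensor_quotient :
    ∃ m : Ideal R, m.IsMaximal ∧ Nontrivial (M ⊗[R] (R ⧸ m)) := by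
  obtain ⟨m, hm, hsmul⟩ := exists_isMaximal_smul_top_ne_top R M
  have : Nontrivial (M ⧸ m • (⊤ : Submodule R M)) := Submodule.Quotient.nontrivial_iff.mpr hsmul
  exact ⟨m, hm, (tensorQuotEquivQuotSMul M m).toEquiv.nontrivial⟩

end Module

namespace LinearMap

variable {R M N : Type*} [CommRing R] [AddCommGroup M] [Module R M] [AddCommGroup N] [Module R N]

theorem range_rTensor_ne_top_of_nontrivial (P : Type*) [AddCommGroup P] [Module R P]
    (f : M →ₗ[R] N) [Nontrivial ((N ⧸ range f) ⊗[R] P)] : range (f.rTensor P) ≠ ⊤ := by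
  intro htop
  have hexact : Function.Exact (f.rTensor P) ((range f).mkQ.rTensor P) :=
    rTensor_exact P (LinearMap.exact_map_mkQ_range f) (Submodule.mkQ_surjective _)
  have hzero : (range f).mkQ.rTensor P = 0 := by
    rw [← ker_eq_top, hexact.linearMap_ker_eq, htop]
  obtain ⟨x, hx⟩ := exists_ne (0 : (N ⧸ range f) ⊗[R] P)
  obtain ⟨y, rfl⟩ := rTensor_surjective P (Submodule.mkQ_surjective _) x
  exact hx (by rw [hzero, zero_apply])

end LinearMap

theorem stmt14_general (R : Type*) [CommRing R] (q : ℤ)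
    (C : ℤ → Type*) [∀ j, AddCommGroup (C j)] [∀ j, Module R (C j)]
    (d : ∀ j, C j →ₗ[R] C (j + 1))
    (hfg : Module.Finite R (C q))
    (hne : LinearMap.range (d (q - 1)) ≠ ⊤) :
    ∃ m : Ideal R, m.IsMaximal ∧
      LinearMap.range (LinearMap.rTensor (R ⧸ m) (d (q - 1))) ≠ ⊤ := by
  have : Module.Finite R (C (q - 1 + 1)) := by rwa [sub_add_cancel]
  have : Nontrivial (C (q - 1 + 1) ⧸ LinearMap.range (d (q - 1))) :=
    Submodule.Quotient.nontrivial_iff.mpr hne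
  obtain ⟨m, hm, _⟩ := Module.exists_isMaximal_nontrivial_tensor_quotient R
    (C (q - 1 + 1) ⧸ LinearMap.range (d (q - 1)))
  exact ⟨m, hm, LinearMap.range_rTensor_ne_top_of_nontrivial _ _⟩

/-- Let `R` be a commutative ring and `C` a cochain complex of `R`-modules
indexed by ℤ with `Cʲ = 0` for all `j > q` and with `C^q` finitely generated.  If the
cohomology `H^q(C)` — that is, the cokernel of the differential `C^{q−1} → C^q` — is nonzero,
then there exists a maximal ideal `m` of `R` such that `H^q(C ⊗_R R/m) ≠ 0`, where
`C ⊗_R R/m` is the cochain complex with terms `Cʲ ⊗_R R/m` and the induced differentials.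
(The cokernel of a map is nonzero iff the map's range is not the whole module.) -/
theorem stmt14 (R : Type*) [CommRing R] (q : ℤ)
    (C : ℤ → Type*) [∀ j, AddCommGroup (C j)] [∀ j, Module R (C j)]
    (d : ∀ j, C j →ₗ[R] C (j + 1))
    (hcomplex : ∀ j, (d (j + 1)).comp (d j) = 0)
    (hzero : ∀ j, q < j → Subsingleton (C j))
    (hfg : Module.Finite R (C q))
    (hne : LinearMap.range (d (q - 1)) ≠ ⊤) :
    ∃ m : Ideal R, m.IsMaximal ∧
      LinearMap.range (LinearMap.rTensor (R ⧸ m) (d (q - 1))) ≠ ⊤ :=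
  stmt14_general R q C d hfg hne
end
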